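/- Let t, s, k, n, m be integers with t ≥ 0, s ≥ 0, k ≥ s+1, n ≥ 2k+t and m > k+t+s. Let ℱ ⊆ {A ∈ C([n], k+t) : |A ∩ [m]| ≥ t+s+1} and 𝒢 ⊆ {B ∈ C([n], k) : |B ∩ [m]| ≥ s+1} be cross-intersecting families. If ℱ is t-intersecting, then |ℱ| + |𝒢| ≤ C(n, k) − Σ_{i=0}^{s} C(m, i)·C(n−m, k−i). -/

import Mathlib

/-!
Shifting the element `n` down to any free `x < n` (the UV-compression along `{x}, {n}`) keeps the
sizes of the sets, does not decrease `|B ∩ [m]|`, and preserves cross-intersection and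
`t`-intersection, so both families may be assumed shifted. Then induct on `n`. If `n = 2k + t`,
complementation in `[n]` maps `ℱ` injectively into the universe of `𝒢`, avoiding `𝒢`. Otherwise
split both families according to whether their sets contain `n`. The sets avoiding `n` are covered
by induction. Removing `n` from the others gives families that are still cross-intersecting and
`t`-intersecting: since `n > 2k + t`, two such sets leave some `x < n` uncovered, and shiftedness
lets us replace `n` by `x` in one of them. These families satisfy the statement for `k - 1`, or are
empty when `k = s + 1` and `m < n`, because then every set lies inside `[m]`. Pascal's rule adds up
the two bounds. When `m ≥ n` the condition on `[m]` says nothing, and the same induction bounds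
`|ℱ| + |𝒢|` by `C(n, k)`. The size of the universe of `𝒢` is found by sorting the `k`-sets
according to `|B ∩ [m]|`.
-/

open Finset UV
open scoped FinsetFamily

section Compression

variable {α : Type*} [DecidableEq α] {i j : α} {A B : Finset α}

lemma UV.compression_subset {β : Type*} [GeneralizedBooleanAlgebra β]
    [DecidableRel (@Disjoint β _ _)] [DecidableLE β] [DecidableEq β] {u v : β}
    {s S : Finset β} (hs : s ⊆ S) (hS : Set.MapsTo (compress u v) S S) : 𝓒 u v s ⊆ S := by
  intro a ha
  obtain ⟨ha, -⟩ | ⟨-, b, hb, rfl⟩ := mem_compression.1 ha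
  · exact hs ha
  · exact hS (hs hb)

lemma UV.sum_compression {β M : Type*} [GeneralizedBooleanAlgebra β]
    [DecidableRel (@Disjoint β _ _)] [DecidableLE β] [DecidableEq β] [AddCommMonoid M]
    (u v : β) (s : Finset β) (f : β → M) :
    ∑ a ∈ 𝓒 u v s, f a = ∑ a ∈ s, if compress u v a ∈ s then f a else f (compress u v a) := by
  rw [compression, sum_union compress_disjoint, filter_image, sum_image compress_injOn, sum_ite]

lemma compress_singleton (i j : α) (A : Finset α) :
    compress {i} {j} A = if i ∉ A ∧ j ∈ A then insert i (A.erase j) else A := by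
  by_cases h : i ∉ A ∧ j ∈ A
  · rw [compress_of_disjoint_of_le (disjoint_singleton_left.2 h.1) (singleton_subset_iff.2 h.2),
      if_pos h]
    ext x
    simp only [mem_sdiff, mem_singleton, mem_insert, mem_erase]
    grind
  · rw [compress, if_neg (by simpa [disjoint_singleton_left] using h), if_neg h]

lemma notMem_and_mem_of_compress_ne (h : compress {i} {j} A ≠ A) : i ∉ A ∧ j ∈ A := by
  by_contra h'
  exact h (by rw [compress_singleton, if_neg h'])

lemma compress_singleton_eq_self (h : j ∈ A → i ∈ A) : compress {i} {j} A = A := by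
  rw [compress_singleton, if_neg (by tauto)]

lemma mapsTo_compress_powersetCard {U : Finset α} (hi : i ∈ U) (k : ℕ) :
    Set.MapsTo (compress {i} {j}) (powersetCard k U : Set (Finset α)) (powersetCard k U) := by
  intro A hA
  rw [mem_coe, mem_powersetCard] at hA ⊢
  refine ⟨?_, by rw [card_compress (by simp), hA.2]⟩
  rw [compress_singleton]
  split_ifs
  · exact insert_subset hi ((erase_subset _ _).trans hA.1)
  · exact hA.1

lemma card_le_card_insert_erase (h : i ∉ A) : #A ≤ #(insert i (A.erase j)) := by
  rw [card_insert_of_notMem (fun hi => h (mem_of_mem_erase hi))]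
  have := pred_card_le_card_erase (s := A) (a := j)
  omega

lemma card_inter_le_card_compress_inter_compress (i j : α) (A B : Finset α) :
    #(A ∩ B) ≤ #(compress {i} {j} A ∩ compress {i} {j} B) := by
  rw [compress_singleton, compress_singleton]
  by_cases hj : j ∈ A ∩ B
  · by_cases hi : i ∈ A ∩ B
    · rw [mem_inter] at hi hj
      rw [if_neg (by tauto), if_neg (by tauto)]
    -- a common element `j` can only be traded for `i`, which is not yet common
    · refine (card_le_card_insert_erase (j := j) hi).trans (card_le_card fun x => ?_)
      simp only [mem_inter, mem_insert, mem_erase] at hi hj ⊢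
      split_ifs <;> grind
  · refine card_le_card fun x => ?_
    simp only [mem_inter] at hj ⊢
    split_ifs <;> grind

lemma inter_compress_eq_compress_inter (hA : compress {i} {j} A ≠ A)
    (hB : compress {i} {j} B ≠ B) : A ∩ compress {i} {j} B = compress {i} {j} A ∩ B := by
  obtain ⟨hiA, hjA⟩ := notMem_and_mem_of_compress_ne hA
  obtain ⟨hiB, hjB⟩ := notMem_and_mem_of_compress_ne hB
  rw [compress_singleton, compress_singleton, if_pos ⟨hiB, hjB⟩, if_pos ⟨hiA, hjA⟩]
  ext x
  simp only [mem_inter, mem_insert, mem_erase]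
  grind

end Compression

lemma sized_of_subset_powersetCard {α : Type*} {𝒜 : Finset (Finset α)} {U : Finset α} {k : ℕ}
    (h : 𝒜 ⊆ powersetCard k U) : (𝒜 : Set (Finset α)).Sized k :=
  Set.Sized.mono (coe_subset.2 h) (Set.sized_powersetCard U k)

section CrossIntersecting

variable {α : Type*} [DecidableEq α] {r : ℕ} {𝒜 ℬ 𝒜' ℬ' : Finset (Finset α)}

/-- `CrossIntersecting t 𝒜 𝒜` says that `𝒜` is `t`-intersecting, and `CrossIntersecting 1 𝒜 ℬ`
that `𝒜` and `ℬ` are cross-intersecting. -/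
def CrossIntersecting (r : ℕ) (𝒜 ℬ : Finset (Finset α)) : Prop :=
  ∀ A ∈ 𝒜, ∀ B ∈ ℬ, r ≤ #(A ∩ B)

lemma CrossIntersecting.mono (h : CrossIntersecting r 𝒜 ℬ) (h𝒜 : 𝒜' ⊆ 𝒜) (hℬ : ℬ' ⊆ ℬ) :
    CrossIntersecting r 𝒜' ℬ' :=
  fun A hA B hB => h A (h𝒜 hA) B (hℬ hB)

lemma CrossIntersecting.compression (h : CrossIntersecting r 𝒜 ℬ) (i j : α) :
    CrossIntersecting r (𝓒 {i} {j} 𝒜) (𝓒 {i} {j} ℬ) := by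
  intro A' hA' B' hB'
  obtain ⟨hA, hcA⟩ | ⟨hA', A, hA, rfl⟩ := mem_compression.1 hA' <;>
  obtain ⟨hB, hcB⟩ | ⟨hB', B, hB, rfl⟩ := mem_compression.1 hB'
  · exact h A' hA B' hB
  · by_cases hA' : compress {i} {j} A' = A'
    · exact (h A' hA B hB).trans
        ((card_inter_le_card_compress_inter_compress i j A' B).trans_eq (by rw [hA']))
    · rw [inter_compress_eq_compress_inter hA' fun e => hB' (e ▸ hB)]
      exact h _ hcA B hB
  · by_cases hB' : compress {i} {j} B' = B'
    · exact (h A hA B' hB).trans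
        ((card_inter_le_card_compress_inter_compress i j A B').trans_eq (by rw [hB']))
    · rw [← inter_compress_eq_compress_inter (fun e => hA' (e ▸ hA)) hB']
      exact h A hA _ hcB
  · exact (h A hA B hB).trans (card_inter_le_card_compress_inter_compress i j A B)

lemma card_add_card_le_of_sdiff_mem {U : Finset α} {S : Finset (Finset α)}
    (h𝒜U : ∀ A ∈ 𝒜, A ⊆ U) (h𝒜S : ∀ A ∈ 𝒜, U \ A ∈ S) (hℬS : ℬ ⊆ S)
    (h : CrossIntersecting 1 𝒜 ℬ) : #𝒜 + #ℬ ≤ #S := by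
  have hmaps : Set.MapsTo (U \ ·) 𝒜 (S \ ℬ : Finset _) := fun A hA => by
    refine mem_sdiff.2 ⟨h𝒜S A hA, fun hAℬ => ?_⟩
    simpa [inter_sdiff_self] using h A hA _ hAℬ
  have hinj : Set.InjOn (U \ ·) 𝒜 := fun A hA A' hA' e => by
    rw [← Finset.sdiff_sdiff_eq_self (h𝒜U A hA), ← Finset.sdiff_sdiff_eq_self (h𝒜U A' hA')]
    exact congrArg (U \ ·) e
  have := card_le_card_of_injOn _ hmaps hinj
  rw [card_sdiff_of_subset hℬS] at this
  have := card_le_card hℬS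
  omega

lemma card_add_card_le_one {t : ℕ} (h𝒜 : (𝒜 : Set (Finset α)).Sized t)
    (hℬ : (ℬ : Set (Finset α)).Sized 0) (h𝒜ℬ : CrossIntersecting 1 𝒜 ℬ)
    (h𝒜𝒜 : CrossIntersecting t 𝒜 𝒜) : #𝒜 + #ℬ ≤ 1 := by
  obtain rfl | ⟨B, hB⟩ := ℬ.eq_empty_or_nonempty
  · refine card_le_one.2 fun A hA A' hA' => ?_
    have := h𝒜𝒜 A hA A' hA'
    have := h𝒜 hA
    have := h𝒜 hA'
    exact (eq_of_subset_of_card_le inter_subset_left (by omega)).symm.trans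
      (eq_of_subset_of_card_le inter_subset_right (by omega))
  · have hℬ : ℬ ⊆ {∅} := fun B hB => mem_singleton.2 (card_eq_zero.1 (hℬ hB))
    have h𝒜 : 𝒜 = ∅ := eq_empty_of_forall_notMem fun A hA => by
      simpa [mem_singleton.1 (hℬ hB)] using h𝒜ℬ A hA B hB
    rw [h𝒜, card_empty, zero_add]
    exact (card_le_card hℬ).trans (card_singleton _).le

lemma nonMemberSubfamily_subset (a : α) (𝒜 : Finset (Finset α)) :
    nonMemberSubfamily a 𝒜 ⊆ 𝒜 :=
  filter_subset _ _

lemma nonMemberSubfamily_mono {a : α} (h : 𝒜 ⊆ ℬ) :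
    nonMemberSubfamily a 𝒜 ⊆ nonMemberSubfamily a ℬ :=
  filter_subset_filter _ h

lemma memberSubfamily_mono {a : α} (h : 𝒜 ⊆ ℬ) :
    memberSubfamily a 𝒜 ⊆ memberSubfamily a ℬ :=
  fun _ hA => mem_memberSubfamily.2 ⟨h (mem_memberSubfamily.1 hA).1, (mem_memberSubfamily.1 hA).2⟩

lemma nonMemberSubfamily_powersetCard {a : α} {U : Finset α} (ha : a ∉ U) (k : ℕ) :
    nonMemberSubfamily a (powersetCard k (insert a U)) = powersetCard k U := by
  ext A
  simp only [mem_nonMemberSubfamily, mem_powersetCard]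
  constructor
  · rintro ⟨⟨hAU, hA⟩, haA⟩
    exact ⟨fun x hx => (mem_insert.1 (hAU hx)).resolve_left (by rintro rfl; exact haA hx), hA⟩
  · rintro ⟨hAU, hA⟩
    exact ⟨⟨hAU.trans (subset_insert _ _), hA⟩, fun h => ha (hAU h)⟩

lemma memberSubfamily_powersetCard {a : α} {U : Finset α} (ha : a ∉ U) (k : ℕ) :
    memberSubfamily a (powersetCard (k + 1) (insert a U)) = powersetCard k U := by
  ext A
  simp only [mem_memberSubfamily, mem_powersetCard]
  constructor
  · rintro ⟨⟨hAU, hA⟩, haA⟩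
    refine ⟨fun x hx => ?_, by rw [card_insert_of_notMem haA] at hA; omega⟩
    exact (mem_insert.1 (hAU (mem_insert_of_mem hx))).resolve_left (by rintro rfl; exact haA hx)
  · rintro ⟨hAU, hA⟩
    have haA : a ∉ A := fun h => ha (hAU h)
    exact ⟨⟨insert_subset_insert _ hAU, by rw [card_insert_of_notMem haA, hA]⟩, haA⟩

lemma card_filter_card_inter_eq {U X : Finset α} (hXU : X ⊆ U) {i k : ℕ} (hik : i ≤ k) :
    #{B ∈ powersetCard k U | #(B ∩ X) = i} = (#X).choose i * (#(U \ X)).choose (k - i) := by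
  have split : ∀ {C D : Finset α}, C ⊆ X → D ⊆ U \ X → (C ∪ D) ∩ X = C ∧ (C ∪ D) \ X = D := by
    intro C D hC hD
    have hDX : Disjoint D X := disjoint_sdiff_self_left.mono_left hD
    rw [union_inter_distrib_right, inter_eq_left.2 hC, disjoint_iff_inter_eq_empty.1 hDX,
      union_empty, union_sdiff_distrib, sdiff_eq_empty_iff_subset.2 hC, empty_union,
      hDX.sdiff_eq_left]
    exact ⟨rfl, rfl⟩
  rw [← card_powersetCard, ← card_powersetCard, ← card_product]
  refine card_nbij' (fun B => (B ∩ X, B \ X)) (fun p => p.1 ∪ p.2) ?_ ?_ ?_ ?_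
  · intro B hB
    simp only [coe_filter, mem_powersetCard, Set.mem_ofPred_eq, coe_product, Set.mem_prod,
      mem_coe] at hB ⊢
    have := card_inter_add_card_sdiff B X
    exact ⟨⟨inter_subset_right, hB.2⟩, sdiff_subset_sdiff hB.1.1 le_rfl, by omega⟩
  · rintro ⟨C, D⟩ hCD
    simp only [coe_product, Set.mem_prod, mem_coe, mem_powersetCard] at hCD
    obtain ⟨⟨hCX, hC⟩, hDX, hD⟩ := hCD
    simp only [coe_filter, mem_powersetCard, Set.mem_ofPred_eq]
    refine ⟨⟨union_subset (hCX.trans hXU) (hDX.trans sdiff_subset), ?_⟩,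
      by rw [(split hCX hDX).1, hC]⟩
    rw [card_union_of_disjoint (Disjoint.mono hCX hDX disjoint_sdiff), hC, hD]
    omega
  · intro B _
    exact sup_inf_sdiff B X
  · rintro ⟨C, D⟩ hCD
    simp only [coe_product, Set.mem_prod, mem_coe, mem_powersetCard] at hCD
    obtain ⟨⟨hCX, -⟩, hDX, -⟩ := hCD
    exact Prod.ext (split hCX hDX).1 (split hCX hDX).2

end CrossIntersecting

section Shifting

variable {i j n : ℕ} {A : Finset ℕ} {𝒜 ℬ : Finset (Finset ℕ)}

def weight (𝒜 : Finset (Finset ℕ)) : ℕ := ∑ A ∈ 𝒜, ∑ a ∈ A, a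

lemma sum_compress_lt (hij : i < j) (h : compress {i} {j} A ≠ A) :
    ∑ a ∈ compress {i} {j} A, a < ∑ a ∈ A, a := by
  obtain ⟨hi, hj⟩ := notMem_and_mem_of_compress_ne h
  rw [compress_singleton, if_pos ⟨hi, hj⟩, sum_insert (fun h => hi (mem_of_mem_erase h)),
    ← add_sum_erase A _ hj]
  omega

lemma weight_compression_lt (hij : i < j) (h : 𝓒 {i} {j} 𝒜 ≠ 𝒜) :
    weight (𝓒 {i} {j} 𝒜) < weight 𝒜 := by
  obtain ⟨A, hA, hcA⟩ : ∃ A ∈ 𝒜, compress {i} {j} A ∉ 𝒜 := by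
    by_contra! hfix
    exact h (eq_of_subset_of_card_le (compression_subset subset_rfl hfix)
      (card_compression _ _ _).ge)
  rw [weight, weight, sum_compression]
  refine sum_lt_sum (fun B hB => ?_) ⟨A, hA, ?_⟩
  · split_ifs with hcB
    · exact le_rfl
    · exact (sum_compress_lt hij fun e => hcB (e ▸ hB)).le
  · rw [if_neg hcA]
    exact sum_compress_lt hij fun e => hcA (by rwa [e])

lemma weight_compression_le (𝒜 : Finset (Finset ℕ)) (hij : i < j) :
    weight (𝓒 {i} {j} 𝒜) ≤ weight 𝒜 := by
  by_cases h : 𝓒 {i} {j} 𝒜 = 𝒜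
  · rw [h]
  · exact (weight_compression_lt hij h).le

def IsShiftedAt (n : ℕ) (𝒜 : Finset (Finset ℕ)) : Prop :=
  ∀ x ∈ Ico 1 n, IsCompressed {x} {n} 𝒜

theorem exists_isShiftedAt (n : ℕ) {P : Finset (Finset ℕ) → Finset (Finset ℕ) → Prop}
    (hP : ∀ x ∈ Ico 1 n, ∀ 𝒜 ℬ, P 𝒜 ℬ → P (𝓒 {x} {n} 𝒜) (𝓒 {x} {n} ℬ)) (h : P 𝒜 ℬ) :
    ∃ 𝒜' ℬ', P 𝒜' ℬ' ∧ #𝒜' = #𝒜 ∧ #ℬ' = #ℬ ∧ IsShiftedAt n 𝒜' ∧ IsShiftedAt n ℬ' := by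
  induction hw : weight 𝒜 + weight ℬ using Nat.strong_induction_on generalizing 𝒜 ℬ with
  | _ w ih =>
  by_cases hs : IsShiftedAt n 𝒜 ∧ IsShiftedAt n ℬ
  · exact ⟨𝒜, ℬ, h, rfl, rfl, hs⟩
  obtain ⟨x, hx, hxn⟩ :
      ∃ x ∈ Ico 1 n, ¬(IsCompressed {x} {n} 𝒜 ∧ IsCompressed {x} {n} ℬ) := by
    by_contra! hc
    exact hs ⟨fun x hx => (hc x hx).1, fun x hx => (hc x hx).2⟩
  have hxn' : x < n := (mem_Ico.1 hx).2
  have hlt : weight (𝓒 {x} {n} 𝒜) + weight (𝓒 {x} {n} ℬ) < w := by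
    rw [← hw]
    by_cases h𝒜 : IsCompressed {x} {n} 𝒜
    · exact add_lt_add_of_le_of_lt (weight_compression_le 𝒜 hxn')
        (weight_compression_lt hxn' fun h => hxn ⟨h𝒜, h⟩)
    · exact add_lt_add_of_lt_of_le (weight_compression_lt hxn' h𝒜)
        (weight_compression_le ℬ hxn')
  obtain ⟨𝒜', ℬ', hP', h𝒜', hℬ', hs'⟩ := ih _ hlt (hP x hx 𝒜 ℬ h) rfl
  exact ⟨𝒜', ℬ', hP', h𝒜'.trans (card_compression _ _ _),
    hℬ'.trans (card_compression _ _ _), hs'⟩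

theorem exists_isShiftedAt_crossIntersecting {t : ℕ} {S T : Finset (Finset ℕ)}
    (hS : ∀ x ∈ Ico 1 n, Set.MapsTo (compress {x} {n}) (S : Set (Finset ℕ)) S)
    (hT : ∀ x ∈ Ico 1 n, Set.MapsTo (compress {x} {n}) (T : Set (Finset ℕ)) T)
    (h𝒜 : 𝒜 ⊆ S) (hℬ : ℬ ⊆ T) (h𝒜ℬ : CrossIntersecting 1 𝒜 ℬ)
    (h𝒜𝒜 : CrossIntersecting t 𝒜 𝒜) :
    ∃ 𝒜' ℬ', (𝒜' ⊆ S ∧ ℬ' ⊆ T ∧ CrossIntersecting 1 𝒜' ℬ' ∧ CrossIntersecting t 𝒜' 𝒜') ∧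
      #𝒜' = #𝒜 ∧ #ℬ' = #ℬ ∧ IsShiftedAt n 𝒜' ∧ IsShiftedAt n ℬ' :=
  exists_isShiftedAt n (fun x hx _ _ ⟨h𝒜, hℬ, h𝒜ℬ, h𝒜𝒜⟩ => ⟨compression_subset h𝒜 (hS x hx),
    compression_subset hℬ (hT x hx), h𝒜ℬ.compression _ _, h𝒜𝒜.compression _ _⟩)
    ⟨h𝒜, hℬ, h𝒜ℬ, h𝒜𝒜⟩

lemma CrossIntersecting.memberSubfamily {a b r : ℕ} (h : CrossIntersecting r 𝒜 ℬ)
    (h𝒜 : (𝒜 : Set (Finset ℕ)).Sized a) (hℬ : (ℬ : Set (Finset ℕ)).Sized b)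
    (hab : a + b < n + r) (hℬs : IsShiftedAt n ℬ) :
    CrossIntersecting r (memberSubfamily n 𝒜) (memberSubfamily n ℬ) := by
  intro A hA B hB
  rw [mem_memberSubfamily] at hA hB
  have hAcard := h𝒜 hA.1
  have hBcard := hℬ hB.1
  have hunion : #(insert n A ∪ insert n B) < #(Icc 1 n) := by
    have := card_union_add_card_inter (insert n A) (insert n B)
    have := h _ hA.1 _ hB.1
    rw [Nat.card_Icc]
    omega
  obtain ⟨x, hx, hxAB⟩ := exists_mem_notMem_of_card_lt_card hunion
  have hxn : x ∈ Ico 1 n := by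
    rw [mem_Icc] at hx
    refine mem_Ico.2 ⟨hx.1, hx.2.lt_of_ne ?_⟩
    rintro rfl
    simp at hxAB
  rw [mem_union, not_or] at hxAB
  have hxB : compress {x} {n} (insert n B) = insert x B := by
    rw [compress_singleton, if_pos ⟨hxAB.2, mem_insert_self _ _⟩, erase_insert hB.2]
  have := h _ hA.1 _ (hxB ▸ (hℬs x hxn) ▸ compress_mem_compression hB.1)
  rwa [inter_insert_of_notMem hxAB.1, insert_inter_of_notMem hB.2] at this

end Shifting

lemma Icc_one_add_one (n : ℕ) : Icc 1 (n + 1) = insert (n + 1) (Icc 1 n) :=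
  (insert_Icc_right_eq_Icc_add_one (by omega)).symm

theorem card_add_card_le_choose {t k n : ℕ} {𝒜 ℬ : Finset (Finset ℕ)} (hn : 2 * k + t ≤ n)
    (h𝒜 : 𝒜 ⊆ powersetCard (k + t) (Icc 1 n)) (hℬ : ℬ ⊆ powersetCard k (Icc 1 n))
    (h𝒜ℬ : CrossIntersecting 1 𝒜 ℬ) (h𝒜𝒜 : CrossIntersecting t 𝒜 𝒜) :
    #𝒜 + #ℬ ≤ n.choose k := by
  induction n using Nat.strong_induction_on generalizing k 𝒜 ℬ with | _ n ih =>
  obtain hn | hn := hn.eq_or_lt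
  · have hS : #(powersetCard k (Icc 1 n)) = n.choose k := by simp
    refine hS ▸ card_add_card_le_of_sdiff_mem (fun A hA => (mem_powersetCard.1 (h𝒜 hA)).1)
      (fun A hA => ?_) hℬ h𝒜ℬ
    obtain ⟨hAU, hAcard⟩ := mem_powersetCard.1 (h𝒜 hA)
    exact mem_powersetCard.2 ⟨sdiff_subset, by rw [card_sdiff_of_subset hAU, Nat.card_Icc]; omega⟩
  obtain _ | k := k
  · rw [zero_add] at h𝒜
    simpa using card_add_card_le_one (sized_of_subset_powersetCard h𝒜)
      (sized_of_subset_powersetCard hℬ) h𝒜ℬ h𝒜𝒜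
  obtain ⟨n, rfl⟩ : ∃ n', n = n' + 1 := ⟨n - 1, by omega⟩
  obtain ⟨𝒜', ℬ', ⟨h𝒜', hℬ', h𝒜ℬ', h𝒜𝒜'⟩, hc𝒜, hcℬ, hs𝒜, hsℬ⟩ :=
    exists_isShiftedAt_crossIntersecting
      (fun x hx => mapsTo_compress_powersetCard (Ico_subset_Icc_self hx) _)
      (fun x hx => mapsTo_compress_powersetCard (Ico_subset_Icc_self hx) _) h𝒜 hℬ h𝒜ℬ h𝒜𝒜
  rw [← hc𝒜, ← hcℬ, ← card_memberSubfamily_add_card_nonMemberSubfamily (n + 1) 𝒜',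
    ← card_memberSubfamily_add_card_nonMemberSubfamily (n + 1) ℬ', Nat.choose_succ_succ']
  have h𝒜ℬ₁ := h𝒜ℬ'.memberSubfamily (sized_of_subset_powersetCard h𝒜')
    (sized_of_subset_powersetCard hℬ') (by omega) hsℬ
  have h𝒜𝒜₁ := h𝒜𝒜'.memberSubfamily (sized_of_subset_powersetCard h𝒜')
    (sized_of_subset_powersetCard h𝒜') (by omega) hs𝒜
  have hnU : n + 1 ∉ Icc 1 n := by simp
  rw [Icc_one_add_one] at h𝒜' hℬ'
  have hmem := ih n (lt_add_one n) (k := k) (by omega)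
    ((memberSubfamily_mono h𝒜').trans
      (by rw [Nat.add_right_comm, memberSubfamily_powersetCard hnU]))
    ((memberSubfamily_mono hℬ').trans (memberSubfamily_powersetCard hnU k).le) h𝒜ℬ₁ h𝒜𝒜₁
  have hnon := ih n (lt_add_one n) (k := k + 1) (by omega)
    ((nonMemberSubfamily_mono h𝒜').trans (nonMemberSubfamily_powersetCard hnU _).le)
    ((nonMemberSubfamily_mono hℬ').trans (nonMemberSubfamily_powersetCard hnU _).le)
    (h𝒜ℬ'.mono (nonMemberSubfamily_subset _ _) (nonMemberSubfamily_subset _ _))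
    (h𝒜𝒜'.mono (nonMemberSubfamily_subset _ _) (nonMemberSubfamily_subset _ _))
  omega

def restrictedSlice (n m k q : ℕ) : Finset (Finset ℕ) :=
  {B ∈ powersetCard k (Icc 1 n) | q ≤ #(B ∩ Icc 1 m)}

section RestrictedSlice

variable {n m k q : ℕ} {B : Finset ℕ}

lemma mem_restrictedSlice :
    B ∈ restrictedSlice n m k q ↔ B ∈ powersetCard k (Icc 1 n) ∧ q ≤ #(B ∩ Icc 1 m) :=
  mem_filter

lemma restrictedSlice_subset : restrictedSlice n m k q ⊆ powersetCard k (Icc 1 n) :=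
  filter_subset _ _

lemma restrictedSlice_eq_empty (h : k < q) : restrictedSlice n m k q = ∅ :=
  filter_false_of_mem fun B hB hq => by
    have := card_le_card (inter_subset_left (s₁ := B) (s₂ := Icc 1 m))
    rw [(mem_powersetCard.1 hB).2] at this
    omega

lemma restrictedSlice_self (h : q ≤ k) : restrictedSlice n n k q = powersetCard k (Icc 1 n) :=
  filter_true_of_mem fun B hB => by
    rw [inter_eq_left.2 (mem_powersetCard.1 hB).1, (mem_powersetCard.1 hB).2]
    exact h

lemma mapsTo_compress_restrictedSlice {x : ℕ} (hx : x ∈ Ico 1 n) :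
    Set.MapsTo (compress {x} {n}) (restrictedSlice n m k q : Set (Finset ℕ))
      (restrictedSlice n m k q) := by
  intro B hB
  rw [mem_coe, mem_restrictedSlice] at hB ⊢
  refine ⟨mapsTo_compress_powersetCard (Ico_subset_Icc_self hx) k hB.1, hB.2.trans ?_⟩
  have hIcc : compress {x} {n} (Icc 1 m) = Icc 1 m :=
    compress_singleton_eq_self fun h => by simp only [mem_Icc, mem_Ico] at h hx ⊢; omega
  simpa [hIcc] using card_inter_le_card_compress_inter_compress x n B (Icc 1 m)

lemma sdiff_mem_restrictedSlice {a : ℕ} {A : Finset ℕ} (hA : A ∈ powersetCard a (Icc 1 n))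
    (hak : a + k = n) (hmn : m ≤ n) (hq : q + a ≤ m) : Icc 1 n \ A ∈ restrictedSlice n m k q := by
  obtain ⟨hAU, hAcard⟩ := mem_powersetCard.1 hA
  refine mem_restrictedSlice.2 ⟨mem_powersetCard.2 ⟨sdiff_subset, ?_⟩, ?_⟩
  · rw [card_sdiff_of_subset hAU, Nat.card_Icc, hAcard]
    omega
  · have hsub : Icc 1 m \ A ⊆ (Icc 1 n \ A) ∩ Icc 1 m := fun x hx => by
      simp only [mem_sdiff, mem_inter, mem_Icc] at hx ⊢
      exact ⟨⟨⟨hx.1.1, hx.1.2.trans hmn⟩, hx.2⟩, hx.1⟩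
    have := le_card_sdiff A (Icc 1 m)
    rw [Nat.card_Icc] at this
    have := card_le_card hsub
    omega

lemma nonMemberSubfamily_restrictedSlice :
    nonMemberSubfamily (n + 1) (restrictedSlice (n + 1) m k q) = restrictedSlice n m k q := by
  ext B
  have := congrArg (B ∈ ·)
    (nonMemberSubfamily_powersetCard (a := n + 1) (U := Icc 1 n) (by simp) k)
  simp only [mem_nonMemberSubfamily, mem_restrictedSlice, Icc_one_add_one, eq_iff_iff] at this ⊢
  tauto

lemma memberSubfamily_restrictedSlice (hmn : m ≤ n) :
    memberSubfamily (n + 1) (restrictedSlice (n + 1) m (k + 1) q) = restrictedSlice n m k q := by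
  ext B
  have := congrArg (B ∈ ·) (memberSubfamily_powersetCard (a := n + 1) (U := Icc 1 n) (by simp) k)
  have hIcc : n + 1 ∉ Icc 1 m := by simp; omega
  simp only [mem_memberSubfamily, mem_restrictedSlice, Icc_one_add_one, eq_iff_iff,
    insert_inter_of_notMem hIcc] at this ⊢
  tauto

lemma card_restrictedSlice_add_one (hmn : m ≤ n) :
    #(restrictedSlice (n + 1) m (k + 1) q) =
      #(restrictedSlice n m k q) + #(restrictedSlice n m (k + 1) q) := by
  rw [← card_memberSubfamily_add_card_nonMemberSubfamily (n + 1),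
    memberSubfamily_restrictedSlice hmn, nonMemberSubfamily_restrictedSlice]

lemma card_restrictedSlice {s : ℕ} (hmn : m ≤ n) (hsk : s ≤ k) :
    #(restrictedSlice n m k (s + 1)) =
      n.choose k - ∑ i ∈ range (s + 1), m.choose i * (n - m).choose (k - i) := by
  have hsub : Icc 1 m ⊆ Icc 1 n := Icc_subset_Icc_right hmn
  have hlow : #{B ∈ powersetCard k (Icc 1 n) | ¬ s + 1 ≤ #(B ∩ Icc 1 m)} =
      ∑ i ∈ range (s + 1), m.choose i * (n - m).choose (k - i) := by
    rw [card_eq_sum_card_fiberwise (f := fun B => #(B ∩ Icc 1 m)) (t := range (s + 1))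
      fun B hB => by simp only [coe_filter, Set.mem_ofPred_eq, mem_coe, mem_range] at hB ⊢; omega]
    refine sum_congr rfl fun i hi => ?_
    rw [mem_range] at hi
    have hfiber := card_filter_card_inter_eq hsub (k := k) (i := i) (by omega)
    rw [card_sdiff_of_subset hsub, Nat.card_Icc, Nat.card_Icc, add_tsub_cancel_right,
      add_tsub_cancel_right] at hfiber
    rw [filter_filter, ← hfiber]
    congr 1
    exact filter_congr fun B _ => by omega
  have := card_filter_add_card_filter_not (s := powersetCard k (Icc 1 n))
    (fun B => s + 1 ≤ #(B ∩ Icc 1 m))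
  rw [card_powersetCard, Nat.card_Icc, add_tsub_cancel_right, hlow] at this
  rw [restrictedSlice]
  omega

end RestrictedSlice

theorem card_add_card_le_card_restrictedSlice {t s k n m : ℕ} {𝒜 ℬ : Finset (Finset ℕ)}
    (hsk : s + 1 ≤ k) (hn : 2 * k + t ≤ n) (hm : k + t + s < m) (hmn : m ≤ n)
    (h𝒜 : 𝒜 ⊆ restrictedSlice n m (k + t) (t + s + 1))
    (hℬ : ℬ ⊆ restrictedSlice n m k (s + 1))
    (h𝒜ℬ : CrossIntersecting 1 𝒜 ℬ) (h𝒜𝒜 : CrossIntersecting t 𝒜 𝒜) :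
    #𝒜 + #ℬ ≤ #(restrictedSlice n m k (s + 1)) := by
  induction n using Nat.strong_induction_on generalizing k 𝒜 ℬ with | _ n ih =>
  obtain rfl | hmn := hmn.eq_or_lt
  · rw [restrictedSlice_self hsk, card_powersetCard, Nat.card_Icc, add_tsub_cancel_right]
    exact card_add_card_le_choose hn (h𝒜.trans restrictedSlice_subset)
      (hℬ.trans restrictedSlice_subset) h𝒜ℬ h𝒜𝒜
  obtain hn | hn := hn.eq_or_lt
  · exact card_add_card_le_of_sdiff_mem
      (fun A hA => (mem_powersetCard.1 (restrictedSlice_subset (h𝒜 hA))).1)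
      (fun A hA => sdiff_mem_restrictedSlice (restrictedSlice_subset (h𝒜 hA)) (by omega) hmn.le
        (by omega)) hℬ h𝒜ℬ
  obtain ⟨n, rfl⟩ : ∃ n', n = n' + 1 := ⟨n - 1, by omega⟩
  obtain ⟨k, rfl⟩ : ∃ k', k = k' + 1 := ⟨k - 1, by omega⟩
  obtain ⟨𝒜', ℬ', ⟨h𝒜', hℬ', h𝒜ℬ', h𝒜𝒜'⟩, hc𝒜, hcℬ, hs𝒜, hsℬ⟩ :=
    exists_isShiftedAt_crossIntersecting (fun _ hx => mapsTo_compress_restrictedSlice hx)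
      (fun _ hx => mapsTo_compress_restrictedSlice hx) h𝒜 hℬ h𝒜ℬ h𝒜𝒜
  rw [← hc𝒜, ← hcℬ, ← card_memberSubfamily_add_card_nonMemberSubfamily (n + 1) 𝒜',
    ← card_memberSubfamily_add_card_nonMemberSubfamily (n + 1) ℬ',
    card_restrictedSlice_add_one (by omega)]
  have h𝒜₁ : memberSubfamily (n + 1) 𝒜' ⊆ restrictedSlice n m (k + t) (t + s + 1) :=
    (memberSubfamily_mono h𝒜').trans
      (by rw [Nat.add_right_comm k, memberSubfamily_restrictedSlice (by omega)])
  have hℬ₁ := (memberSubfamily_mono hℬ').trans (memberSubfamily_restrictedSlice (by omega)).le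
  have hmem : #(memberSubfamily (n + 1) 𝒜') + #(memberSubfamily (n + 1) ℬ') ≤
      #(restrictedSlice n m k (s + 1)) := by
    obtain rfl | hsk : k = s ∨ s + 1 ≤ k := by omega
    · rw [restrictedSlice_eq_empty (by omega), subset_empty] at h𝒜₁ hℬ₁
      simp [h𝒜₁, hℬ₁]
    refine ih n (lt_add_one n) (by omega) (by omega) (by omega) (by omega) h𝒜₁ hℬ₁ ?_ ?_
    · exact h𝒜ℬ'.memberSubfamily (sized_of_subset_powersetCard (h𝒜'.trans restrictedSlice_subset))
        (sized_of_subset_powersetCard (hℬ'.trans restrictedSlice_subset)) (by omega) hsℬ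
    · exact h𝒜𝒜'.memberSubfamily (sized_of_subset_powersetCard (h𝒜'.trans restrictedSlice_subset))
        (sized_of_subset_powersetCard (h𝒜'.trans restrictedSlice_subset)) (by omega) hs𝒜
  have hnon := ih n (lt_add_one n) hsk (by omega) hm (by omega)
    ((nonMemberSubfamily_mono h𝒜').trans nonMemberSubfamily_restrictedSlice.le)
    ((nonMemberSubfamily_mono hℬ').trans nonMemberSubfamily_restrictedSlice.le)
    (h𝒜ℬ'.mono (nonMemberSubfamily_subset _ _) (nonMemberSubfamily_subset _ _))
    (h𝒜𝒜'.mono (nonMemberSubfamily_subset _ _) (nonMemberSubfamily_subset _ _))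
  omega

theorem restricted_universe_bound
    (t s k n m : ℕ) (hk : s + 1 ≤ k) (hn : 2 * k + t ≤ n) (hm : k + t + s < m)
    (F G : Finset (Finset ℕ))
    (hF : ∀ A ∈ F, A ∈ powersetCard (k + t) (Icc 1 n) ∧ t + s + 1 ≤ (A ∩ Icc 1 m).card)
    (hG : ∀ B ∈ G, B ∈ powersetCard k (Icc 1 n) ∧ s + 1 ≤ (B ∩ Icc 1 m).card)
    (hcross : ∀ A ∈ F, ∀ B ∈ G, (A ∩ B).Nonempty)
    (hint : ∀ A ∈ F, ∀ A' ∈ F, t ≤ (A ∩ A').card) :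
    F.card + G.card ≤
      Nat.choose n k
        - ∑ i ∈ Finset.range (s + 1),
            Nat.choose m i * Nat.choose (n - m) (k - i) := by
  have hFG : CrossIntersecting 1 F G := fun A hA B hB => card_pos.2 (hcross A hA B hB)
  obtain hmn | hnm := le_total m n
  · rw [← card_restrictedSlice hmn (by omega)]
    exact card_add_card_le_card_restrictedSlice hk hn hm hmn
      (fun A hA => mem_restrictedSlice.2 (hF A hA)) (fun B hB => mem_restrictedSlice.2 (hG B hB))
      hFG hint
  · rw [sum_eq_zero fun i hi => ?_, Nat.sub_zero]
    · exact card_add_card_le_choose hn (fun A hA => (hF A hA).1) (fun B hB => (hG B hB).1) hFG hint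
    · rw [mem_range] at hi
      rw [Nat.sub_eq_zero_of_le hnm, Nat.choose_eq_zero_of_lt (show 0 < k - i by omega), mul_zero]
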